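/- Let R be a 2-torsion-free semiprime ring whose Lie ring Der R of derivations is solvable. Then Der R = 0, i.e., every derivation of R is the zero map. -/
import Mathlib

/-- A derivation of a (possibly non-unital) ring, as a plain function:
an additive map satisfying the Leibniz rule. -/
def IsDerivationFn {R : Type*} [NonUnitalRing R] (d : R → R) : Prop :=
  (∀ a b : R, d (a + b) = d a + d b) ∧ (∀ a b : R, d (a * b) = d a * b + a * d b)

/-- The Lie bracket of two maps `R → R`: `[d, e] = d ∘ e - e ∘ d`. -/
def fComm {R : Type*} [NonUnitalRing R] (d e : R → R) : R → R :=
  fun a => d (e a) - e (d a)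

/-- The derived series of the Lie ring of derivations of `R`:
`derDelta R 0` is the additive group of all derivations (its additive closure), and
`derDelta R (n+1)` is the additive subgroup generated by all brackets `[d, e]` with
`d, e ∈ derDelta R n`. -/
def derDelta (R : Type*) [NonUnitalRing R] : ℕ → AddSubgroup (R → R)
  | 0 => AddSubgroup.closure {d : R → R | IsDerivationFn d}
  | n + 1 => AddSubgroup.closure
      {f : R → R | ∃ d ∈ derDelta R n, ∃ e ∈ derDelta R n, f = fComm d e}

section Aux

variable {R : Type*} [NonUnitalRing R]

/-- Centrality of an element. -/
def InZ (z : R) : Prop := ∀ r : R, z * r = r * z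

lemma InZ.neg' {z : R} (hz : InZ z) : InZ (-z) := fun r => by
  rw [neg_mul, hz, mul_neg]

lemma InZ.mul' {z w : R} (hz : InZ z) (hw : InZ w) : InZ (z * w) := fun r => by
  rw [mul_assoc, hw, ← mul_assoc, hz, mul_assoc]

/-- Pull a central factor out to the front. -/
lemma InZ.lc {z : R} (hz : InZ z) (a b : R) : a * (z * b) = z * (a * b) := by
  rw [← mul_assoc, ← hz, mul_assoc]

lemma IsDerivationFn.map_zero' {d : R → R} (hd : IsDerivationFn d) : d 0 = 0 := by
  have := hd.1 0 0
  simpa using this.symm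

lemma IsDerivationFn.map_neg' {d : R → R} (hd : IsDerivationFn d) (a : R) :
    d (-a) = -(d a) := by
  have h := hd.1 a (-a)
  rw [add_neg_cancel, hd.map_zero'] at h
  exact (neg_eq_of_add_eq_zero_right h.symm).symm

lemma IsDerivationFn.map_sub' {d : R → R} (hd : IsDerivationFn d) (a b : R) :
    d (a - b) = d a - d b := by
  rw [sub_eq_add_neg, hd.1, hd.map_neg', sub_eq_add_neg]

end Aux

section Structural

variable {R : Type*} [NonUnitalRing R]

lemma isDer_zero : IsDerivationFn (0 : R → R) := by
  constructor <;> intro a b <;> simp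

lemma isDer_add {d e : R → R} (hd : IsDerivationFn d) (he : IsDerivationFn e) :
    IsDerivationFn (d + e) := by
  constructor <;> intro a b <;> simp only [Pi.add_apply, hd.1, he.1, hd.2, he.2]
  · abel
  · rw [add_mul, mul_add]; abel

lemma isDer_neg {d : R → R} (hd : IsDerivationFn d) : IsDerivationFn (-d) := by
  constructor <;> intro a b <;> simp only [Pi.neg_apply, hd.1, hd.2]
  · abel
  · rw [neg_mul, mul_neg]; abel

lemma isDer_fComm {d e : R → R} (hd : IsDerivationFn d) (he : IsDerivationFn e) :
    IsDerivationFn (fComm d e) := by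
  constructor <;> intro a b
  · simp only [fComm, he.1, hd.1, hd.map_sub', he.map_sub']
    abel
  · simp only [fComm, hd.2, he.2, hd.1, he.1, hd.map_sub', he.map_sub']
    simp only [add_mul, mul_add, sub_mul, mul_sub]
    abel

lemma derDelta_zero_eq (R : Type*) [NonUnitalRing R] :
    derDelta R 0 = AddSubgroup.closure {d : R → R | IsDerivationFn d} := rfl

lemma derDelta_succ_eq (R : Type*) [NonUnitalRing R] (n : ℕ) :
    derDelta R (n + 1) = AddSubgroup.closure
      {f : R → R | ∃ d ∈ derDelta R n, ∃ e ∈ derDelta R n, f = fComm d e} := rfl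

lemma mem_derDelta_zero {d : R → R} (hd : IsDerivationFn d) : d ∈ derDelta R 0 := by
  rw [derDelta_zero_eq]
  exact AddSubgroup.subset_closure hd

lemma derDelta_isDer : ∀ n : ℕ, ∀ f ∈ derDelta R n, IsDerivationFn f := by
  intro n
  induction n with
  | zero =>
    intro f hf
    rw [derDelta_zero_eq] at hf
    refine AddSubgroup.closure_induction (fun x hx => hx) isDer_zero
      (fun x y _ _ hx hy => isDer_add hx hy) (fun x _ hx => isDer_neg hx) hf
  | succ n ih =>
    intro f hf
    rw [derDelta_succ_eq] at hf
    refine AddSubgroup.closure_induction ?_ isDer_zero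
      (fun x y _ _ hx hy => isDer_add hx hy) (fun x _ hx => isDer_neg hx) hf
    rintro x ⟨d, hd, e, he, rfl⟩
    exact isDer_fComm (ih d hd) (ih e he)

lemma fComm_add_right {g f f' : R → R} (hg : IsDerivationFn g) :
    fComm g (f + f') = fComm g f + fComm g f' := by
  funext a
  simp only [fComm, Pi.add_apply, hg.1]
  abel

lemma fComm_neg_right {g f : R → R} (hg : IsDerivationFn g) :
    fComm g (-f) = -(fComm g f) := by
  funext a
  simp only [fComm, Pi.neg_apply, hg.map_neg']
  abel

lemma fComm_zero_right {g : R → R} (hg : IsDerivationFn g) :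
    fComm g (0 : R → R) = 0 := by
  funext a
  simp [fComm, hg.map_zero']

lemma fComm_jacobi {g d e : R → R} (hg : IsDerivationFn g) (hd : IsDerivationFn d)
    (he : IsDerivationFn e) :
    fComm g (fComm d e) = fComm (fComm g d) e + fComm d (fComm g e) := by
  funext a
  simp only [fComm, Pi.add_apply, hg.map_sub', hd.map_sub', he.map_sub']
  abel

/-- The derived series terms are "ideals": bracketing with any derivation stays inside. -/
lemma fComm_mem_derDelta : ∀ n : ℕ, ∀ g : R → R, IsDerivationFn g →
    ∀ f ∈ derDelta R n, fComm g f ∈ derDelta R n := by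
  intro n
  induction n with
  | zero =>
    intro g hg f hf
    exact mem_derDelta_zero (isDer_fComm hg (derDelta_isDer 0 f hf))
  | succ n ih =>
    intro g hg f hf
    rw [derDelta_succ_eq] at hf ⊢
    refine AddSubgroup.closure_induction ?_ ?_ ?_ ?_ hf
    · rintro x ⟨d, hd, e, he, rfl⟩
      rw [fComm_jacobi hg (derDelta_isDer n d hd) (derDelta_isDer n e he)]
      exact add_mem
        (AddSubgroup.subset_closure ⟨fComm g d, ih g hg d hd, e, he, rfl⟩)
        (AddSubgroup.subset_closure ⟨d, hd, fComm g e, ih g hg e he, rfl⟩)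
    · rw [fComm_zero_right hg]; exact zero_mem _
    · intro x y _ _ hx hy
      rw [fComm_add_right hg]
      exact add_mem hx hy
    · intro x _ hx
      rw [fComm_neg_right hg]
      exact neg_mem hx

end Structural

section Inner

variable {R : Type*} [NonUnitalRing R]

/-- Inner derivation. -/
def adm (u : R) : R → R := fun a => u * a - a * u

lemma isDer_adm (u : R) : IsDerivationFn (adm u) := by
  constructor <;> intro a b <;> simp only [adm] <;> noncomm_ring

lemma adm_zero_fn (u : R) : adm u 0 = 0 := by simp [adm]

lemma fComm_adm_adm (p q : R) : fComm (adm p) (adm q) = adm (p * q - q * p) := by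
  funext r
  simp only [fComm, adm]
  noncomm_ring

lemma adm_of_der {δ : R → R} (hδ : IsDerivationFn δ) (x : R) :
    adm (δ x) = -(fComm (adm x) δ) := by
  funext r
  simp only [fComm, adm, Pi.neg_apply, hδ.map_sub', hδ.2]
  abel

lemma adm_eq_zero_iff_inZ (u : R) : adm u = 0 ↔ InZ u := by
  constructor
  · intro h r
    have := congrFun h r
    simpa [adm, sub_eq_zero] using this
  · intro h
    funext r
    simp [adm, sub_eq_zero, h r]

/-- If `[u,[u,a]]` is central for all `a`, in a 2-torsion-free semiprime ring,
then `u` is central. -/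
lemma central_of_adsq (h2 : ∀ x : R, 2 • x = 0 → x = 0)
    (hsemi : ∀ a : R, (∀ r : R, a * r * a = 0) → a = 0)
    (u : R) (hc : ∀ a : R, InZ (adm u (adm u a))) : InZ u := by
  set T := adm u with hT
  have hT_leib : ∀ a b : R, T (a * b) = T a * b + a * T b := (isDer_adm u).2
  have hT_add : ∀ a b : R, T (a + b) = T a + T b := (isDer_adm u).1
  have hT_z : ∀ z : R, InZ z → T z = 0 := by
    intro z hz
    simp [hT, adm, sub_eq_zero, (hz u).symm]
  -- T (a * u) = T a * u
  have tmu : ∀ a : R, T (a * u) = T a * u := by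
    intro a
    simp only [hT, adm]
    noncomm_ring
  -- TTx * T r = 0
  have t4 : ∀ x r : R, T (T x) * T r = 0 := by
    intro x r
    have hw : InZ (T (T x)) := hc x
    have hwu : InZ (T (T x) * u) := by
      have := hc (x * u)
      rwa [tmu, tmu] at this
    have e1 : T (T x) * (u * r) = T (T x) * (r * u) := by
      calc T (T x) * (u * r) = T (T x) * u * r := by rw [mul_assoc]
        _ = r * (T (T x) * u) := hwu r
        _ = r * T (T x) * u := by rw [mul_assoc]
        _ = T (T x) * r * u := by rw [← hw r]
        _ = T (T x) * (r * u) := by rw [mul_assoc]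
    have : T (T x) * (u * r - r * u) = 0 := by
      rw [mul_sub, e1, sub_self]
    simpa [hT, adm] using this
  -- TTx * TTr = 0
  have t5 : ∀ x r : R, T (T x) * T (T r) = 0 := by
    intro x r
    have := congrArg T (t4 x r)
    rw [hT_leib, hT_z _ (hc x), zero_mul, zero_add] at this
    simpa [hT, adm_zero_fn] using this
  -- TTx = 0
  have t6 : ∀ x : R, T (T x) = 0 := by
    intro x
    apply hsemi
    intro r
    have hw : InZ (T (T x)) := hc x
    calc T (T x) * r * T (T x) = T (T x) * (r * T (T x)) := by rw [mul_assoc]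
      _ = T (T x) * (T (T x) * r) := by rw [← hw r]
      _ = T (T x) * T (T x) * r := by rw [mul_assoc]
      _ = 0 := by rw [t5 x x, zero_mul]
  -- Tx * Ty = 0
  have t7 : ∀ x y : R, T x * T y = 0 := by
    intro x y
    apply h2
    rw [two_nsmul]
    have := t6 (x * y)
    rw [hT_leib, hT_add, hT_leib, hT_leib, t6 x, zero_mul, zero_add, t6 y, mul_zero,
      add_zero] at this
    exact this
  -- Tx = 0
  have t8 : ∀ x : R, T x = 0 := by
    intro x
    apply hsemi
    intro r
    have := t7 x (r * x)
    rw [hT_leib, mul_add, ← mul_assoc, t7 x r, zero_mul, zero_add, ← mul_assoc] at this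
    exact this
  intro r
  have := t8 r
  simpa [hT, adm, sub_eq_zero] using this

end Inner

section Core

variable {R : Type*} [NonUnitalRing R]

lemma delta_zero_of_central (h2 : ∀ x : R, 2 • x = 0 → x = 0)
    (hsemi : ∀ a : R, (∀ r : R, a * r * a = 0) → a = 0)
    {δ : R → R} (hδ : IsDerivationFn δ)
    (hcen : ∀ x : R, InZ (δ x))
    (hKey : ∀ z : R, InZ z → ∀ w : R, δ (δ z) * δ w = 0) :
    ∀ x : R, δ x = 0 := by
  -- Step 1: δ x * [y, r] + δ y * [x, r] = 0
  have hP : ∀ x y r : R, δ x * (y * r - r * y) + δ y * (x * r - r * x) = 0 := by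
    intro x y r
    have hp := hcen x
    have hq := hcen y
    have e : δ (x * y + y * x) = δ x * y + x * δ y + (δ y * x + y * δ x) := by
      rw [hδ.1, hδ.2, hδ.2]
    have hE : InZ (δ x * y + x * δ y + (δ y * x + y * δ x)) := e ▸ hcen (x * y + y * x)
    have key : δ x * (y * r - r * y) + δ y * (x * r - r * x)
        + (δ x * (y * r - r * y) + δ y * (x * r - r * x))
        = (δ x * y + x * δ y + (δ y * x + y * δ x)) * r
          - r * (δ x * y + x * δ y + (δ y * x + y * δ x)) := by
      simp only [mul_sub, mul_add, add_mul, mul_assoc, hp.lc, hq.lc, ← hq x, ← hp y]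
      abel
    apply h2
    rw [two_nsmul, key, hE r, sub_self]
  -- Step 2: δ x * [x, r] = 0
  have hxx : ∀ x r : R, δ x * (x * r - r * x) = 0 := by
    intro x r
    apply h2
    rw [two_nsmul]
    exact hP x x r
  intro x
  have hp := hcen x
  have hc : InZ (δ x * δ x) := hp.mul' hp
  -- Step 3: (δ x)^2 kills all commutators
  have hcy : ∀ y r : R, (δ x * δ x) * (y * r - r * y) = 0 := by
    intro y r
    have hq := hcen y
    have h1 : δ x * (y * r - r * y) = -(δ y * (x * r - r * x)) :=
      eq_neg_of_add_eq_zero_left (hP x y r)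
    calc (δ x * δ x) * (y * r - r * y) = δ x * (δ x * (y * r - r * y)) := by
          rw [mul_assoc]
      _ = δ x * (-(δ y * (x * r - r * x))) := by rw [h1]
      _ = -(δ x * (δ y * (x * r - r * x))) := by rw [mul_neg]
      _ = -(δ y * (δ x * (x * r - r * x))) := by rw [hq.lc]
      _ = 0 := by rw [hxx x r, mul_zero, neg_zero]
  -- Step 4: (δ x)^2 * a is central for every a
  have hca : ∀ a : R, InZ ((δ x * δ x) * a) := by
    intro a r
    have : (δ x * δ x) * (a * r) = (δ x * δ x) * (r * a) := by
      have := hcy a r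
      rw [mul_sub, sub_eq_zero] at this
      exact this
    calc (δ x * δ x) * a * r = (δ x * δ x) * (a * r) := by rw [mul_assoc]
      _ = (δ x * δ x) * (r * a) := this
      _ = r * ((δ x * δ x) * a) := (hc.lc r a).symm
  -- Step 5: the key quantitative relation
  have hF : ∀ a w : R,
      δ (δ x * δ x) * (δ a * δ w) + δ (δ x * δ x) * (δ a * δ w)
        + (δ x * δ x) * (δ (δ a) * δ w) = 0 := by
    intro a w
    have h0 := hKey ((δ x * δ x) * a) (hca a) w
    have e1 : δ (δ ((δ x * δ x) * a))
        = δ (δ (δ x * δ x)) * a + δ (δ x * δ x) * δ a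
          + (δ (δ x * δ x) * δ a + (δ x * δ x) * δ (δ a)) := by
      rw [hδ.2 (δ x * δ x) a, hδ.1, hδ.2 (δ (δ x * δ x)) a, hδ.2 (δ x * δ x) (δ a)]
    rw [e1] at h0
    have hzc2 : δ (δ (δ x * δ x)) * δ w = 0 := hKey (δ x * δ x) hc w
    have e3 : δ (δ (δ x * δ x)) * (a * δ w) = 0 := by
      rw [(hcen w a).symm, ← mul_assoc, hzc2, zero_mul]
    calc δ (δ x * δ x) * (δ a * δ w) + δ (δ x * δ x) * (δ a * δ w)
          + (δ x * δ x) * (δ (δ a) * δ w)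
        = (δ (δ (δ x * δ x)) * a + δ (δ x * δ x) * δ a
            + (δ (δ x * δ x) * δ a + (δ x * δ x) * δ (δ a))) * δ w
          - δ (δ (δ x * δ x)) * (a * δ w) := by
          simp only [add_mul, mul_assoc]
          abel
      _ = 0 - δ (δ (δ x * δ x)) * (a * δ w) := by rw [h0]
      _ = 0 := by rw [e3, sub_zero]
  -- Step 6: extract c*(c*p) = 0 where p = δ x, c = p*p
  have hF1 := hF x x
  have hF2 := hF (x * x) x
  have e1 : δ (x * x) = δ x * x + x * δ x := hδ.2 x x
  have e2 : δ (δ (x * x)) = δ (δ x) * x + δ x * δ x + (δ x * δ x + x * δ (δ x)) := by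
    rw [hδ.2 x x, hδ.1, hδ.2 (δ x) x, hδ.2 x (δ x)]
  rw [e2, e1] at hF2
  have hd2 := hcen (δ x)
  -- normalize hF2
  have n1 : (δ x * x + x * δ x) * δ x
      = δ x * (δ x * x) + δ x * (δ x * x) := by
    simp only [add_mul, mul_assoc]
    rw [hp.lc x (δ x), ← hp x]
  have n2 : (δ (δ x) * x + δ x * δ x + (δ x * δ x + x * δ (δ x))) * δ x
      = δ (δ x) * (δ x * x) + δ x * (δ x * δ x) + (δ x * (δ x * δ x)
          + δ (δ x) * (δ x * x)) := by
    simp only [add_mul, mul_assoc]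
    rw [hd2.lc x (δ x), ← hp x]
  rw [n1, n2] at hF2
  -- multiply hF1 by x on the right
  have hF1x : δ (δ x * δ x) * (δ x * (δ x * x)) + δ (δ x * δ x) * (δ x * (δ x * x))
      + δ x * (δ x * (δ (δ x) * (δ x * x))) = 0 := by
    have := congrArg (· * x) hF1
    simpa only [add_mul, zero_mul, mul_assoc] using this
  simp only [mul_add, mul_assoc] at hF2
  -- extract (δ x)^5 = 0
  have hM3 : δ x * (δ x * (δ x * (δ x * δ x))) + δ x * (δ x * (δ x * (δ x * δ x))) = 0 := by
    calc δ x * (δ x * (δ x * (δ x * δ x))) + δ x * (δ x * (δ x * (δ x * δ x)))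
        = (δ (δ x * δ x) * (δ x * (δ x * x)) + δ (δ x * δ x) * (δ x * (δ x * x)) +
            (δ (δ x * δ x) * (δ x * (δ x * x)) + δ (δ x * δ x) * (δ x * (δ x * x))) +
            (δ x * (δ x * (δ (δ x) * (δ x * x))) + δ x * (δ x * (δ x * (δ x * δ x))) +
              (δ x * (δ x * (δ x * (δ x * δ x))) + δ x * (δ x * (δ (δ x) * (δ x * x))))))
          - ((δ (δ x * δ x) * (δ x * (δ x * x)) + δ (δ x * δ x) * (δ x * (δ x * x))
              + δ x * (δ x * (δ (δ x) * (δ x * x))))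
            + (δ (δ x * δ x) * (δ x * (δ x * x)) + δ (δ x * δ x) * (δ x * (δ x * x))
              + δ x * (δ x * (δ (δ x) * (δ x * x))))) := by abel
      _ = 0 - (0 + 0) := by rw [hF2, hF1x]
      _ = 0 := by simp
  have h5 : δ x * (δ x * (δ x * (δ x * δ x))) = 0 := by
    apply h2
    rw [two_nsmul]
    exact hM3
  have h5t : ∀ t : R, δ x * (δ x * (δ x * (δ x * (δ x * t)))) = 0 := by
    intro t
    have := congrArg (· * t) h5
    simpa only [mul_assoc, zero_mul] using this
  have hq4 : InZ (δ x * (δ x * (δ x * δ x))) := hp.mul' (hp.mul' (hp.mul' hp))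
  have h4 : δ x * (δ x * (δ x * δ x)) = 0 := by
    apply hsemi
    intro r
    calc δ x * (δ x * (δ x * δ x)) * r * (δ x * (δ x * (δ x * δ x)))
        = δ x * (δ x * (δ x * δ x)) * (δ x * (δ x * (δ x * δ x)) * r) := by
          rw [mul_assoc, ← hq4 r]
      _ = 0 := by
          simp only [mul_assoc]
          exact h5t (δ x * (δ x * (δ x * r)))
  have h4t : ∀ t : R, δ x * (δ x * (δ x * (δ x * t))) = 0 := by
    intro t
    have := congrArg (· * t) h4
    simpa only [mul_assoc, zero_mul] using this
  have hc0 : δ x * δ x = 0 := by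
    apply hsemi
    intro r
    calc δ x * δ x * r * (δ x * δ x)
        = δ x * δ x * (δ x * δ x * r) := by rw [mul_assoc, ← hc r]
      _ = 0 := by
          simp only [mul_assoc]
          exact h4t r
  apply hsemi
  intro r
  calc δ x * r * δ x = δ x * (δ x * r) := by rw [mul_assoc, ← hp r]
    _ = 0 := by rw [← mul_assoc, hc0, zero_mul]

end Core

section Main

variable {R : Type*} [NonUnitalRing R]

lemma derDelta_step (h2 : ∀ x : R, 2 • x = 0 → x = 0)
    (hsemi : ∀ a : R, (∀ r : R, a * r * a = 0) → a = 0)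
    (n : ℕ) (hbot : derDelta R (n + 1) = ⊥) : derDelta R n = ⊥ := by
  rw [AddSubgroup.eq_bot_iff_forall]
  intro δ hmem
  have hab : ∀ f ∈ derDelta R n, ∀ g ∈ derDelta R n, fComm f g = 0 := by
    intro f hf g hg
    have hm : fComm f g ∈ derDelta R (n + 1) := by
      rw [derDelta_succ_eq]
      exact AddSubgroup.subset_closure ⟨f, hf, g, hg, rfl⟩
    rwa [hbot, AddSubgroup.mem_bot] at hm
  have hδ := derDelta_isDer n δ hmem
  have step1 : ∀ x : R, adm (δ x) ∈ derDelta R n := by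
    intro x
    rw [adm_of_der hδ x]
    exact neg_mem (fComm_mem_derDelta n (adm x) (isDer_adm x) δ hmem)
  have step2 : ∀ x a : R, adm (a * δ x - δ x * a) ∈ derDelta R n := by
    intro x a
    rw [← fComm_adm_adm]
    exact fComm_mem_derDelta n (adm a) (isDer_adm a) _ (step1 x)
  have hcen : ∀ x : R, InZ (δ x) := by
    intro x
    apply central_of_adsq h2 hsemi
    intro a
    have h0 : fComm (adm (δ x)) (adm (a * δ x - δ x * a)) = 0 :=
      hab _ (step1 x) _ (step2 x a)
    rw [fComm_adm_adm] at h0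
    have h1 : InZ (δ x * (a * δ x - δ x * a) - (a * δ x - δ x * a) * δ x) :=
      (adm_eq_zero_iff_inZ _).mp h0
    have h2' : adm (δ x) (adm (δ x) a)
        = -(δ x * (a * δ x - δ x * a) - (a * δ x - δ x * a) * δ x) := by
      simp only [adm]
      noncomm_ring
    rw [h2']
    exact h1.neg'
  have hKey : ∀ z : R, InZ z → ∀ w : R, δ (δ z) * δ w = 0 := by
    intro z hz w
    have hg : IsDerivationFn (fun a => z * δ a) := by
      constructor
      · intro a b
        show z * δ (a + b) = z * δ a + z * δ b
        rw [hδ.1, mul_add]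
      · intro a b
        show z * δ (a * b) = z * δ a * b + a * (z * δ b)
        rw [hδ.2 a b, mul_add, ← mul_assoc z (δ a) b, ← hz.lc a (δ b)]
    have hmemg : (fun r : R => δ z * δ r) ∈ derDelta R n := by
      have h1 : fComm (fun a => z * δ a) δ ∈ derDelta R n :=
        fComm_mem_derDelta n _ hg δ hmem
      have h2'' : (fun r : R => δ z * δ r) = -(fComm (fun a => z * δ a) δ) := by
        funext r
        simp only [fComm, Pi.neg_apply, hδ.2]
        abel
      rw [h2'']
      exact neg_mem h1
    have h3 := hab δ hmem _ hmemg
    have h4 : δ (δ z * δ w) - δ z * δ (δ w) = 0 := by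
      simpa [fComm] using congrFun h3 w
    rw [hδ.2 (δ z) (δ w), add_sub_cancel_right] at h4
    exact h4
  have hz := delta_zero_of_central h2 hsemi hδ hcen hKey
  funext a
  exact hz a

end Main

/-- Let `R` be a 2-torsion-free semiprime ring whose Lie ring of derivations is
solvable. Then every derivation of `R` is the zero map. -/
theorem stmt18 (R : Type*) [NonUnitalRing R]
    (h2 : ∀ x : R, 2 • x = 0 → x = 0)
    (hsemi : ∀ a : R, (∀ r : R, a * r * a = 0) → a = 0)
    (hsolv : ∃ n : ℕ, derDelta R n = ⊥) :
    ∀ d : R → R, IsDerivationFn d → ∀ a : R, d a = 0 := by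
  obtain ⟨n, hn⟩ := hsolv
  have hzero : ∀ m : ℕ, derDelta R m = ⊥ → derDelta R 0 = ⊥ := by
    intro m
    induction m with
    | zero => exact id
    | succ k ih => exact fun h => ih (derDelta_step h2 hsemi k h)
  intro d hd a
  have hmem : d ∈ derDelta R 0 := mem_derDelta_zero hd
  rw [hzero n hn, AddSubgroup.mem_bot] at hmem
  rw [hmem]
  rfl
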